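/- arXiv:math/0101133 — 3 statements merged into one kernel-verified Lean document; each statement's English description precedes it below -/
import Mathlib

section
/- Suppose 𝒰 : G₁ × G₁ × G₂ → U(1) satisfies 𝒰(g,h,α_k(s)) · 𝒰(g·h, k, s) = 𝒰(h,k,s) · 𝒰(g, h·k, s) for all g,h,k ∈ G₁, s ∈ G₂, where α is a left action of G₁ on the set G₂ (α_{gh} = α_g ∘ α_h, α_e = id). Define Z(g,k,s) = 𝒰(g, g⁻¹k, s) · 𝒰(g⁻¹, k, s). Then Z(g,h,α_k(s)) = Z(g, h·k, s) for all g,h,k ∈ G₁ and s ∈ G₂. -/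
section TwistedCocycle

variable {G X M : Type*} [Group G] [CommMonoidWithZero M] [IsCancelMulZero M]

def cocycleZ (U : G → G → X → M) (g k : G) (s : X) : M :=
  U g (g⁻¹ * k) s * U g⁻¹ k s

/- Multiplying the cocycle identities at `(g, g⁻¹h, k)` and at `(g⁻¹, h, k)`, the extra factor
`U h k s * U (g⁻¹ * h) k s` appears on both sides and cancels. -/
theorem cocycleZ_apply_action (α : G → X → X) (U : G → G → X → M)
    (hU : ∀ g h s, U g h s ≠ 0)
    (hcoc : ∀ g h k s, U g h (α k s) * U (g * h) k s = U h k s * U g (h * k) s)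
    (g h k : G) (s : X) :
    cocycleZ U g h (α k s) = cocycleZ U g (h * k) s := by
  have h₁ := hcoc g (g⁻¹ * h) k s
  have h₂ := hcoc g⁻¹ h k s
  rw [mul_inv_cancel_left, mul_assoc] at h₁
  refine mul_right_cancel₀ (mul_ne_zero (hU h k s) (hU (g⁻¹ * h) k s)) ?_
  calc cocycleZ U g h (α k s) * (U h k s * U (g⁻¹ * h) k s)
      = (U g (g⁻¹ * h) (α k s) * U h k s) * (U g⁻¹ h (α k s) * U (g⁻¹ * h) k s) := by
        unfold cocycleZ; ac_rfl
    _ = (U (g⁻¹ * h) k s * U g (g⁻¹ * (h * k)) s) * (U h k s * U g⁻¹ (h * k) s) := by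
        rw [h₁, h₂]
    _ = cocycleZ U g (h * k) s * (U h k s * U (g⁻¹ * h) k s) := by
        unfold cocycleZ; ac_rfl

end TwistedCocycle

theorem stmt_2_general {G₁ G₂ : Type*} [Group G₁]
    (α : G₁ → G₂ → G₂)
    (U : G₁ → G₁ → G₂ → ℂ)
    (hU : ∀ g h s, ‖U g h s‖ = 1)
    (hcoc : ∀ g h k s, U g h (α k s) * U (g * h) k s = U h k s * U g (h * k) s) :
    ∀ (g h k : G₁) (s : G₂),
      U g (g⁻¹ * h) (α k s) * U g⁻¹ h (α k s)
        = U g (g⁻¹ * (h * k)) s * U g⁻¹ (h * k) s :=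
  cocycleZ_apply_action α U (fun g h s => norm_ne_zero_iff.mp (by rw [hU]; exact one_ne_zero)) hcoc

theorem stmt_2 {G₁ G₂ : Type*} [Group G₁] [Group G₂]
    (α : G₁ → G₂ → G₂)
    (hact : ∀ g h s, α (g * h) s = α g (α h s))
    (hone : ∀ s, α 1 s = s)
    (hbij : ∀ g, Function.Bijective (α g))
    (U : G₁ → G₁ → G₂ → ℂ)
    (hU : ∀ g h s, ‖U g h s‖ = 1)
    (hcoc : ∀ g h k s, U g h (α k s) * U (g * h) k s = U h k s * U g (h * k) s) :
    ∀ (g h k : G₁) (s : G₂),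
      U g (g⁻¹ * h) (α k s) * U g⁻¹ h (α k s)
        = U g (g⁻¹ * (h * k)) s * U g⁻¹ (h * k) s :=
  stmt_2_general α U hU hcoc
end

section
/- For g, s, t ∈ ℝ \ {0}, define α_g(s) = gs/(s(g−1)+1) and β_s(g) = s(g−1)+1 whenever s(g−1)+1 ≠ 0. If s(g−1)+1 ≠ 0 and t(β_s(g)−1)+1 ≠ 0, then (ts)(g−1)+1 ≠ 0 and α_g(ts) = α_{β_s(g)}(t) · α_g(s). -/
theorem stmt_6_general (g s t : ℝ)
    (h1 : s * (g - 1) + 1 ≠ 0)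
    (h2 : t * ((s * (g - 1) + 1) - 1) + 1 ≠ 0) :
    (t * s) * (g - 1) + 1 ≠ 0 ∧
      g * (t * s) / ((t * s) * (g - 1) + 1)
        = ((s * (g - 1) + 1) * t / (t * ((s * (g - 1) + 1) - 1) + 1))
            * (g * s / (s * (g - 1) + 1)) := by
  have hβ : (t * s) * (g - 1) + 1 = t * ((s * (g - 1) + 1) - 1) + 1 := by ring
  refine ⟨hβ ▸ h2, ?_⟩
  rw [hβ, div_mul_div_comm, div_eq_div_iff h2 (mul_ne_zero h2 h1)]
  ring

theorem stmt_6 (g s t : ℝ) (hg : g ≠ 0) (hs : s ≠ 0) (ht : t ≠ 0)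
    (h1 : s * (g - 1) + 1 ≠ 0)
    (h2 : t * ((s * (g - 1) + 1) - 1) + 1 ≠ 0) :
    (t * s) * (g - 1) + 1 ≠ 0 ∧
      g * (t * s) / ((t * s) * (g - 1) + 1)
        = ((s * (g - 1) + 1) * t / (t * ((s * (g - 1) + 1) - 1) + 1))
            * (g * s / (s * (g - 1) + 1)) :=
  stmt_6_general g s t h1 h2
end

section
/- For λ ∈ ℝ, define f_λ(a,b,c,d) = λ·b·(log c)/(a·c²) for a, c > 0 and b, d ∈ ℝ. Then f_λ satisfies the functional equation (1/l²)·f_λ(a,b,c,d) + f_λ(ac, ad + b/c, l, m) = f_λ(c,d,l,m) + f_λ(a,b, cl, cm + d/l) for all a, c, l > 0 and b, d, m ∈ ℝ. -/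
/-- `f_λ(a,b,c,d) = λ b log(c) / (a c²)`. -/
noncomputable def fLam (lam a b c d : ℝ) : ℝ := lam * b * Real.log c / (a * c ^ 2)

theorem fLam_cocycle (lam : ℝ) {a c l : ℝ} (b d m : ℝ) (ha : a ≠ 0) (hc : c ≠ 0) (hl : l ≠ 0) :
    (1 / l ^ 2) * fLam lam a b c d + fLam lam (a * c) (a * d + b / c) l m
      = fLam lam c d l m + fLam lam a b (c * l) (c * m + d / l) := by
  unfold fLam
  rw [Real.log_mul hc hl]
  field_simp
  ring

theorem stmt_15 (lam : ℝ) (a b c d l m : ℝ)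
    (ha : 0 < a) (hc : 0 < c) (hl : 0 < l) :
    (1 / l ^ 2) * fLam lam a b c d + fLam lam (a * c) (a * d + b / c) l m
      = fLam lam c d l m + fLam lam a b (c * l) (c * m + d / l) :=
  fLam_cocycle lam b d m ha.ne' hc.ne' hl.ne'
end
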